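/- arXiv:2504.16456 — 9 statements merged into one kernel-verified Lean document; each statement's English description precedes it below -/
import Mathlib

section
/- For any measurable map T : X → X of a metric space, any Borel probability measures μ, ν on X, and any 0 < t < 1, the expansion exponent satisfies E_{tμ+(1−t)ν}(T) = min{E_μ(T), E_ν(T)}. -/
open MeasureTheory Metric Filter

variable {X : Type*} [MetricSpace X] [MeasurableSpace X] [BorelSpace X]

/-- The set of rates `λ` witnessing uniform expansion of `T` at scale `ε` μ-a.e. around each point. -/
def measExpSet (T : X → X) (μ : Measure X) : Set ℝ :=
  {lam | ∃ ε > (0 : ℝ), ∀ x : X,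
    μ {y | y ∈ ball x ε ∧ dist (T x) (T y) < Real.exp lam * dist x y} = 0}

/-- The expansion exponent of the measure `μ` with respect to `T` (with `sSup ∅ = ⊥`). -/
noncomputable def Emeas (T : X → X) (μ : Measure X) : EReal :=
  sSup ((fun lam : ℝ => (lam : EReal)) '' measExpSet T μ)

lemma measExpSet_lower (T : X → X) (μ : Measure X) {a b : ℝ} (hab : a ≤ b)
    (hb : b ∈ measExpSet T μ) : a ∈ measExpSet T μ := by
  obtain ⟨ε, hε, h⟩ := hb
  refine ⟨ε, hε, fun x => measure_mono_null ?_ (h x)⟩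
  intro y hy
  refine ⟨hy.1, lt_of_lt_of_le hy.2 ?_⟩
  exact mul_le_mul_of_nonneg_right (Real.exp_le_exp.2 hab) dist_nonneg

lemma Emeas_mono (T : X → X) {μ ν : Measure X}
    (h : measExpSet T μ ⊆ measExpSet T ν) : Emeas T μ ≤ Emeas T ν :=
  sSup_le_sSup (Set.image_mono h)

theorem expansion_exponent_convex_combination
    (T : X → X) (hT : Measurable T) (μ ν : Measure X)
    [IsProbabilityMeasure μ] [IsProbabilityMeasure ν]
    (t : ℝ) (h0 : 0 < t) (h1 : t < 1) :
    Emeas T (ENNReal.ofReal t • μ + ENNReal.ofReal (1 - t) • ν) =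
      min (Emeas T μ) (Emeas T ν) := by
  have ht : ENNReal.ofReal t ≠ 0 := by
    rw [Ne, ENNReal.ofReal_eq_zero]; exact h0.not_ge
  have ht' : ENNReal.ofReal (1 - t) ≠ 0 := by
    rw [Ne, ENNReal.ofReal_eq_zero]; push_neg; linarith
  have hset : measExpSet T (ENNReal.ofReal t • μ + ENNReal.ofReal (1 - t) • ν) =
      measExpSet T μ ∩ measExpSet T ν := by
    ext lam
    constructor
    · rintro ⟨ε, hε, h⟩
      have h' : ∀ x, μ {y | y ∈ ball x ε ∧ dist (T x) (T y) < Real.exp lam * dist x y} = 0 ∧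
          ν {y | y ∈ ball x ε ∧ dist (T x) (T y) < Real.exp lam * dist x y} = 0 := by
        intro x
        have := h x
        simp only [Measure.add_apply, Measure.smul_apply, smul_eq_mul, add_eq_zero,
          mul_eq_zero] at this
        exact ⟨this.1.resolve_left ht, this.2.resolve_left ht'⟩
      exact ⟨⟨ε, hε, fun x => (h' x).1⟩, ⟨ε, hε, fun x => (h' x).2⟩⟩
    · rintro ⟨⟨ε₁, hε₁, h₁⟩, ⟨ε₂, hε₂, h₂⟩⟩
      refine ⟨min ε₁ ε₂, lt_min hε₁ hε₂, fun x => ?_⟩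
      simp only [Measure.add_apply, Measure.smul_apply, smul_eq_mul, add_eq_zero, mul_eq_zero]
      constructor
      · right
        apply measure_mono_null _ (h₁ x)
        intro y hy
        exact ⟨mem_ball.2 ((mem_ball.1 hy.1).trans_le (min_le_left _ _)), hy.2⟩
      · right
        apply measure_mono_null _ (h₂ x)
        intro y hy
        exact ⟨mem_ball.2 ((mem_ball.1 hy.1).trans_le (min_le_right _ _)), hy.2⟩
  have key : Emeas T (ENNReal.ofReal t • μ + ENNReal.ofReal (1 - t) • ν) =
      sSup ((fun lam : ℝ => (lam : EReal)) '' (measExpSet T μ ∩ measExpSet T ν)) := by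
    rw [Emeas, hset]
  rw [key]
  apply le_antisymm
  · exact le_min
      (sSup_le_sSup (Set.image_mono Set.inter_subset_left))
      (sSup_le_sSup (Set.image_mono Set.inter_subset_right))
  · rw [← EReal.ge_of_forall_gt_iff_ge]
    intro z hz
    have hzμ : (z : EReal) < Emeas T μ := lt_of_lt_of_le hz (min_le_left _ _)
    have hzν : (z : EReal) < Emeas T ν := lt_of_lt_of_le hz (min_le_right _ _)
    obtain ⟨_, ⟨a, ha, rfl⟩, hza⟩ := lt_sSup_iff.1 hzμ
    obtain ⟨_, ⟨b, hb, rfl⟩, hzb⟩ := lt_sSup_iff.1 hzν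
    have hza' : z ≤ a := le_of_lt (EReal.coe_lt_coe_iff.1 hza)
    have hzb' : z ≤ b := le_of_lt (EReal.coe_lt_coe_iff.1 hzb)
    exact le_sSup ⟨z, ⟨measExpSet_lower T μ hza' ha, measExpSet_lower T ν hzb' hb⟩, rfl⟩
end

section
/- Let T : X → X be a measurable map of a metric space. Then the expansion exponent of T equals the infimum of the expansion exponents of all Borel probability measures on X: E(T) = inf_μ E_μ(T). -/
open MeasureTheory Metric Filter

variable {X : Type*} [MetricSpace X] [MeasurableSpace X] [BorelSpace X]

/-- The expansion exponent of the map `T` (with `sSup ∅ = ⊥`). -/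
noncomputable def Emap (T : X → X) : EReal :=
  sSup ((fun lam : ℝ => (lam : EReal)) ''
    {lam | ∃ ε > (0 : ℝ), ∀ x y : X, dist x y < ε →
      Real.exp lam * dist x y ≤ dist (T x) (T y)})

theorem map_exponent_eq_iInf_measure_exponent
    (T : X → X) (hT : Measurable T) :
    Emap T = ⨅ μ : {μ : Measure X // IsProbabilityMeasure μ}, Emeas T (μ : Measure X) := by
  apply le_antisymm
  · -- Emap ≤ each Emeas
    refine le_iInf fun ⟨μ, hμ⟩ => ?_
    apply sSup_le_sSup
    apply Set.image_mono
    rintro lam ⟨ε, hε, h⟩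
    refine ⟨ε, hε, fun x => ?_⟩
    have hempty : {y | y ∈ ball x ε ∧ dist (T x) (T y) < Real.exp lam * dist x y} = (∅ : Set X) := by
      ext y
      simp only [Set.mem_setOf_eq, Set.mem_empty_iff_false, iff_false, not_and]
      intro hy
      rw [mem_ball, dist_comm] at hy
      exact not_lt.2 (h x y hy)
    rw [hempty]
    exact measure_empty
  · -- iInf ≤ Emap
    rw [← EReal.le_of_forall_lt_iff_le]
    intro c hc
    -- c is not a uniform expansion rate
    have hnot : ∀ ε > (0:ℝ), ∃ x y : X, dist x y < ε ∧
        dist (T x) (T y) < Real.exp c * dist x y := by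
      intro ε hε
      by_contra h
      push_neg at h
      have hmem : (c : EReal) ∈ (fun lam : ℝ => (lam : EReal)) ''
          {lam | ∃ ε > (0 : ℝ), ∀ x y : X, dist x y < ε →
            Real.exp lam * dist x y ≤ dist (T x) (T y)} := by
        refine ⟨c, ⟨ε, hε, fun x y hxy => ?_⟩, rfl⟩
        exact h x y hxy
      exact absurd (le_sSup hmem) (not_le.2 hc)
    have hn : ∀ n : ℕ, ∃ x y : X, dist x y < 1 / (n + 1) ∧
        dist (T x) (T y) < Real.exp c * dist x y := by
      intro n
      apply hnot
      positivity
    choose x y hd hexp using hn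
    set μ : Measure X := Measure.sum (fun n => ((1/2 : ENNReal))^(n+1) • Measure.dirac (y n))
      with hμdef
    have hμy : ∀ n, ((1/2 : ENNReal))^(n+1) ≤ μ {y n} := by
      intro n
      rw [hμdef, Measure.sum_apply _ (measurableSet_singleton _)]
      calc ((1/2 : ENNReal))^(n+1) = ((1/2 : ENNReal))^(n+1) • Measure.dirac (y n) {y n} := by
            simp [Measure.dirac_apply_of_mem]
        _ ≤ _ := ENNReal.le_tsum n
    have hprob : IsProbabilityMeasure μ := by
      constructor
      rw [hμdef, Measure.sum_apply _ MeasurableSet.univ]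
      simp only [Measure.smul_apply, Measure.dirac_apply_of_mem (Set.mem_univ _), smul_eq_mul,
        mul_one]
      have : ∑' n : ℕ, ((1/2 : ENNReal))^(n+1) = (1/2) * ∑' n : ℕ, ((1/2 : ENNReal))^n := by
        rw [← ENNReal.tsum_mul_left]
        simp [pow_succ, mul_comm]
      rw [this, ENNReal.tsum_geometric]
      have h2 : (1 : ENNReal) - 1/2 = 1/2 := by
        simp [one_div, ENNReal.one_sub_inv_two]
      rw [h2]
      norm_num
      exact ENNReal.inv_mul_cancel (by norm_num) (by norm_num)
    refine iInf_le_of_le ⟨μ, hprob⟩ ?_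
    -- Emeas T μ ≤ c
    apply sSup_le
    rintro _ ⟨lam, ⟨ε, hε, hlam⟩, rfl⟩
    rw [EReal.coe_le_coe_iff]
    by_contra hcl
    push_neg at hcl
    obtain ⟨n, hnε⟩ := exists_nat_one_div_lt hε
    have hyn : y n ∈ {z | z ∈ ball (x n) ε ∧
        dist (T (x n)) (T z) < Real.exp lam * dist (x n) z} := by
      constructor
      · rw [mem_ball, dist_comm]
        exact lt_trans (hd n) hnε
      · calc dist (T (x n)) (T (y n)) < Real.exp c * dist (x n) (y n) := hexp n
          _ ≤ Real.exp lam * dist (x n) (y n) := by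
              apply mul_le_mul_of_nonneg_right _ dist_nonneg
              exact Real.exp_le_exp.2 hcl.le
    have h0 := hlam (x n)
    have hpos : (0:ENNReal) < μ {z | z ∈ ball (x n) ε ∧
        dist (T (x n)) (T z) < Real.exp lam * dist (x n) z} :=
      lt_of_lt_of_le (ENNReal.pow_pos (by norm_num) _) ((hμy n).trans (measure_mono (Set.singleton_subset_iff.2 hyn)))
    exact absurd h0 (ne_of_gt hpos)
end

section
/- A measurable map of a metric space T : X → X expands small distances if and only if every Borel probability measure on X has positive expansion exponent with respect to T. -/
open MeasureTheory Metric Filter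

variable {X : Type*} [MetricSpace X] [MeasurableSpace X] [BorelSpace X]

theorem expands_small_distances_iff_all_measures_positive
    (T : X → X) (hT : Measurable T) :
    (∃ k > (1 : ℝ), ∃ ε > (0 : ℝ), ∀ x : X, ∀ y ∈ ball x ε,
        k * dist x y ≤ dist (T x) (T y)) ↔
    (∀ μ : Measure X, IsProbabilityMeasure μ → 0 < Emeas T μ) := by
  constructor
  · rintro ⟨k, hk, ε, hε, hexp⟩ μ hμ
    have hmem : (Real.log k : EReal) ∈ (fun lam : ℝ => (lam : EReal)) '' measExpSet T μ := by
      refine ⟨Real.log k, ⟨ε, hε, fun x => ?_⟩, rfl⟩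
      have : {y | y ∈ ball x ε ∧ dist (T x) (T y) < Real.exp (Real.log k) * dist x y}
          = (∅ : Set X) := by
        ext y
        simp only [Set.mem_setOf_eq, Set.mem_empty_iff_false, iff_false, not_and]
        intro hy hlt
        rw [Real.exp_log (by linarith)] at hlt
        exact absurd (hexp x y hy) (not_le.mpr hlt)
      rw [this, measure_empty]
    calc (0 : EReal) < (Real.log k : EReal) := by exact_mod_cast Real.log_pos hk
      _ ≤ Emeas T μ := le_sSup hmem
  · intro hall
    by_contra hne
    push_neg at hne
    have hpt : ∀ n : ℕ, ∃ x yy : X, yy ∈ ball x (1 / (n + 1)) ∧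
        dist (T x) (T yy) < (1 + 1 / (n + 1)) * dist x yy := by
      intro n
      have h1 : (1 : ℝ) < 1 + 1 / (n + 1) := by
        have : (0:ℝ) < 1 / (n + 1) := by positivity
        linarith
      obtain ⟨x, y, hy, hlt⟩ := hne (1 + 1 / (n + 1)) h1 (1 / (n + 1)) (by positivity)
      exact ⟨x, y, hy, hlt⟩
    choose x y hball hlt using hpt
    set μ : Measure X := Measure.sum (fun n => ((2 : ENNReal)⁻¹) ^ (n + 1) • Measure.dirac (y n))
      with hμdef
    have hprob : IsProbabilityMeasure μ := by
      constructor
      rw [hμdef, Measure.sum_apply _ MeasurableSet.univ]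
      simp only [Measure.smul_apply, measure_univ, smul_eq_mul, mul_one]
      calc ∑' n : ℕ, ((2 : ENNReal)⁻¹) ^ (n + 1)
          = ∑' n : ℕ, (2 : ENNReal)⁻¹ * ((2 : ENNReal)⁻¹) ^ n := by
            congr 1; ext n; rw [pow_succ, mul_comm]
        _ = (2 : ENNReal)⁻¹ * ∑' n : ℕ, ((2 : ENNReal)⁻¹) ^ n := ENNReal.tsum_mul_left
        _ = (2 : ENNReal)⁻¹ * 2 := by rw [ENNReal.tsum_geometric]; norm_num
        _ = 1 := ENNReal.inv_mul_cancel (by norm_num) (by norm_num)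
    have hle : Emeas T μ ≤ 0 := by
      apply sSup_le
      rintro a ⟨lam, ⟨ε, hε, hzero⟩, rfl⟩
      simp only
      by_contra hlam0
      push_neg at hlam0
      have hlam : (0 : ℝ) < lam := by exact_mod_cast hlam0
      have hexp1 : (1 : ℝ) < Real.exp lam := by simpa using Real.exp_lt_exp.mpr hlam
      obtain ⟨n, hn⟩ := exists_nat_one_div_lt (lt_min hε (sub_pos.mpr hexp1))
      have hnε : 1 / ((n : ℝ) + 1) < ε := lt_of_lt_of_le hn (min_le_left _ _)
      have hnk : 1 + 1 / ((n : ℝ) + 1) < Real.exp lam := by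
        have := lt_of_lt_of_le hn (min_le_right _ _)
        linarith
      have hd : 0 < dist (x n) (y n) := by
        rcases eq_or_ne (x n) (y n) with h | h
        · exfalso
          have h2 := hlt n
          rw [h] at h2
          simp at h2
        · exact dist_pos.mpr h
      have hymem : y n ∈ {y' | y' ∈ ball (x n) ε ∧
          dist (T (x n)) (T y') < Real.exp lam * dist (x n) y'} := by
        constructor
        · exact mem_ball.mpr (lt_trans (mem_ball.mp (hball n)) hnε)
        · calc dist (T (x n)) (T (y n)) < (1 + 1 / (n + 1)) * dist (x n) (y n) := hlt n
            _ < Real.exp lam * dist (x n) (y n) := by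
                exact mul_lt_mul_of_pos_right hnk hd
      have hz := hzero (x n)
      rw [hμdef, Measure.sum_apply_eq_zero] at hz
      have hz' := hz n
      rw [Measure.smul_apply, smul_eq_mul, Measure.dirac_apply_of_mem hymem, mul_one] at hz'
      exact (pow_ne_zero _ (by norm_num : (2 : ENNReal)⁻¹ ≠ 0)) hz'
    exact absurd (hall μ hprob) (not_lt.mpr hle)
end

section
/- Every nonatomic T-invariant Borel probability measure with positive expansion exponent of a measurable map T : X → X of a metric space is positively expansive: there exists ε > 0 such that μ({y ∈ X : d(T^i(x),T^i(y)) ≤ ε for all i ≥ 0}) = 0 for all x ∈ X. -/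
open MeasureTheory Metric Filter

variable {X : Type*} [MetricSpace X] [MeasurableSpace X] [BorelSpace X]

theorem nonatomic_invariant_pos_exponent_positively_expansive
    (T : X → X) (hT : Measurable T) (μ : Measure X) [IsProbabilityMeasure μ]
    (hna : ∀ x : X, μ {x} = 0)
    (hinv : ∀ B : Set X, MeasurableSet B → μ (T ⁻¹' B) = μ B)
    (hpos : 0 < Emeas T μ) :
    ∃ ε > (0 : ℝ), ∀ x : X, μ {y | ∀ i : ℕ, dist (T^[i] x) (T^[i] y) ≤ ε} = 0 := by
  -- extract a positive rate lam in measExpSet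
  obtain ⟨lam, hlamS, hlam0⟩ : ∃ lam ∈ measExpSet T μ, (0 : ℝ) < lam := by
    by_contra h
    push_neg at h
    have : Emeas T μ ≤ 0 := by
      apply sSup_le
      rintro a ⟨lam, hlam, rfl⟩
      show (lam : EReal) ≤ (0 : EReal)
      exact_mod_cast h lam hlam
    exact absurd hpos (not_lt.mpr this)
  obtain ⟨ε, hε, hnull⟩ := hlamS
  -- the bad set at a point z
  set Bad : X → Set X := fun z =>
    {y | y ∈ ball z ε ∧ dist (T z) (T y) < Real.exp lam * dist z y} with hBad
  have hBadMeas : ∀ z, MeasurableSet (Bad z) := by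
    intro z
    apply measurableSet_ball.inter
    exact measurableSet_lt ((continuous_const.dist continuous_id).measurable.comp hT)
      (measurable_const.mul (continuous_const.dist continuous_id).measurable)
  -- invariance for iterates
  have hinvIter : ∀ (n : ℕ) (B : Set X), MeasurableSet B → μ (T^[n] ⁻¹' B) = μ B := by
    intro n
    induction n with
    | zero => intro B _; simp
    | succ n ih =>
        intro B hB
        rw [Function.iterate_succ, Set.preimage_comp, hinv _ ((hT.iterate n) hB), ih B hB]
  refine ⟨ε / 2, by linarith, fun x => ?_⟩
  -- the null set to avoid
  set N : Set X := ⋃ i : ℕ, T^[i] ⁻¹' Bad (T^[i] x) with hN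
  have hNnull : μ N = 0 := by
    apply measure_iUnion_null
    intro i
    rw [hinvIter i _ (hBadMeas _)]
    exact hnull _
  -- main inclusion
  have hsub : {y | ∀ i : ℕ, dist (T^[i] x) (T^[i] y) ≤ ε / 2} ⊆ {x} ∪ N := by
    intro y hy
    by_cases hyN : y ∈ N
    · exact Or.inr hyN
    · left
      simp only [Set.mem_setOf_eq] at hy
      have hyB : ∀ i : ℕ, T^[i] y ∉ Bad (T^[i] x) := by
        intro i hi
        exact hyN (Set.mem_iUnion.mpr ⟨i, hi⟩)
      -- growth estimate
      have key : ∀ i : ℕ, Real.exp (i * lam) * dist x y ≤ dist (T^[i] x) (T^[i] y) := by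
        intro i
        induction i with
        | zero => simp
        | succ i ih =>
            have hball : T^[i] y ∈ ball (T^[i] x) ε := by
              rw [mem_ball, dist_comm]
              exact lt_of_le_of_lt (hy i) (by linarith)
            have hge : Real.exp lam * dist (T^[i] x) (T^[i] y)
                ≤ dist (T (T^[i] x)) (T (T^[i] y)) := by
              by_contra hlt
              push_neg at hlt
              exact hyB i ⟨hball, hlt⟩
            calc Real.exp ((i + 1 : ℕ) * lam) * dist x y
                = Real.exp lam * (Real.exp (i * lam) * dist x y) := by
                  rw [← mul_assoc, ← Real.exp_add]
                  congr 2
                  push_cast; ring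
              _ ≤ Real.exp lam * dist (T^[i] x) (T^[i] y) := by
                  exact mul_le_mul_of_nonneg_left ih (Real.exp_pos _).le
              _ ≤ dist (T (T^[i] x)) (T (T^[i] y)) := hge
              _ = dist (T^[i+1] x) (T^[i+1] y) := by
                  rw [Function.iterate_succ_apply', Function.iterate_succ_apply']
      -- conclude y = x
      have hd : dist x y = 0 := by
        by_contra hd
        have hdpos : 0 < dist x y := lt_of_le_of_ne dist_nonneg (Ne.symm hd)
        obtain ⟨n, hn⟩ := exists_nat_gt ((ε / 2) / (lam * dist x y))
        have h1 : (1 : ℝ) + n * lam ≤ Real.exp (n * lam) := by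
          have := Real.add_one_le_exp ((n : ℝ) * lam)
          linarith
        have h2 : Real.exp (n * lam) * dist x y ≤ ε / 2 := le_trans (key n) (hy n)
        have h3 : ε / 2 < n * (lam * dist x y) := by
          rw [div_lt_iff₀ (by positivity)] at hn
          linarith [hn]
        nlinarith [hdpos, h1, h2, h3]
      have : y = x := by rwa [dist_eq_zero, eq_comm] at hd
      simp [this]
  refine le_antisymm ?_ zero_le
  calc μ {y | ∀ i : ℕ, dist (T^[i] x) (T^[i] y) ≤ ε / 2}
      ≤ μ ({x} ∪ N) := measure_mono hsub
    _ ≤ μ {x} + μ N := measure_union_le _ _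
    _ = 0 := by rw [hna x, hNnull, add_zero]
end

section
/- Let T : X → X be a measurable map of a metric space, k > 1 and ε > 0, and for each x ∈ X let C(x) = {y ∈ B(x,ε) : d(T(x),T(y)) ≥ k·d(x,y)}. Then for every x ∈ X, Φ_{ε/2}(x) \ {x} ⊆ ⋃_{i≥0} T^{-i}(B(T^i(x),ε) \ C(T^i(x))), where Φ_{ε/2}(x) = {y : d(T^i(x),T^i(y)) ≤ ε/2 for all i ≥ 0}. -/
open Metric

theorem phi_subset_union_nonexpanding
    {X : Type*} [MetricSpace X] (T : X → X) (k ε : ℝ) (hk : 1 < k) (hε : 0 < ε)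
    (x : X) :
    {y : X | ∀ i : ℕ, dist (T^[i] x) (T^[i] y) ≤ ε / 2} \ {x} ⊆
      ⋃ i : ℕ, T^[i] ⁻¹'
        (ball (T^[i] x) ε \
          {w | w ∈ ball (T^[i] x) ε ∧ k * dist (T^[i] x) w ≤ dist (T (T^[i] x)) (T w)}) := by
  rintro y ⟨hy, hyx⟩
  simp only [Set.mem_setOf_eq] at hy
  have hball : ∀ i : ℕ, T^[i] y ∈ ball (T^[i] x) ε := by
    intro i
    rw [mem_ball, dist_comm]
    exact lt_of_le_of_lt (hy i) (by linarith)
  by_contra h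
  simp only [Set.mem_iUnion, Set.mem_preimage, Set.mem_diff, Set.mem_setOf_eq, not_exists,
    not_and, not_not] at h
  push_neg at h
  have key : ∀ i : ℕ, k * dist (T^[i] x) (T^[i] y) ≤ dist (T^[i+1] x) (T^[i+1] y) := by
    intro i
    have := (h i (hball i)).2
    rw [← Function.iterate_succ_apply' T i x, ← Function.iterate_succ_apply' T i y] at this
    exact this
  have hd0 : 0 < dist x y := dist_pos.2 fun e => hyx (by simp [e.symm])
  have hgrow : ∀ i : ℕ, k ^ i * dist x y ≤ dist (T^[i] x) (T^[i] y) := by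
    intro i
    induction i with
    | zero => simp
    | succ n ih =>
      calc k ^ (n+1) * dist x y = k * (k ^ n * dist x y) := by ring
        _ ≤ k * dist (T^[n] x) (T^[n] y) := by
            apply mul_le_mul_of_nonneg_left ih (by linarith)
        _ ≤ dist (T^[n+1] x) (T^[n+1] y) := key n
  obtain ⟨n, hn⟩ := pow_unbounded_of_one_lt ((ε/2) / dist x y) hk
  rw [div_lt_iff₀ hd0] at hn
  have := (hgrow n).trans (hy n)
  linarith
end

section
/- Let T : X → X be a map of a metric space, k > 1, ε > 0, and for each x ∈ X let C(x) = {y ∈ B(x,ε) : d(T(x),T(y)) ≥ k·d(x,y)}. Then for every x ∈ X, every integer n ≥ 2 and every 0 < γ < ε: B(x,n,γ) \ ⋃_{i=0}^{n-1} T^{-i}(B(T^i(x),γ) \ C(T^i(x))) ⊆ B(x, k^{-(n-1)}γ), where B(x,n,γ) = {y : d(T^i(x),T^i(y)) < γ for all 0 ≤ i ≤ n−1}. -/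
open Metric

theorem bowen_ball_diff_subset_small_ball
    {X : Type*} [MetricSpace X] (T : X → X) (k ε : ℝ) (hk : 1 < k) (hε : 0 < ε)
    (x : X) (n : ℕ) (hn : 2 ≤ n) (γ : ℝ) (hγ0 : 0 < γ) (hγε : γ < ε) :
    {y : X | ∀ i < n, dist (T^[i] x) (T^[i] y) < γ} \
      (⋃ i ∈ Finset.range n, T^[i] ⁻¹'
        (ball (T^[i] x) γ \
          {w | w ∈ ball (T^[i] x) ε ∧ k * dist (T^[i] x) w ≤ dist (T (T^[i] x)) (T w)})) ⊆
      ball x (γ / k ^ (n - 1)) := by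
  intro y hy
  obtain ⟨hB, hN⟩ := hy
  simp only [Set.mem_setOf_eq] at hB
  simp only [Set.mem_iUnion, Set.mem_preimage, Finset.mem_range, not_exists] at hN
  have hk0 : (0:ℝ) < k := lt_trans one_pos hk
  have hC : ∀ i < n, k * dist (T^[i] x) (T^[i] y) ≤ dist (T^[i+1] x) (T^[i+1] y) := by
    intro i hi
    have hball : T^[i] y ∈ ball (T^[i] x) γ := mem_ball'.mpr (hB i hi)
    have h := hN i hi
    rw [Set.mem_diff] at h
    push_neg at h
    have hc := h hball
    rw [Set.mem_setOf_eq] at hc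
    have := hc.2
    rw [Function.iterate_succ_apply', Function.iterate_succ_apply']; exact this
  have key : ∀ m ≤ n - 1, k ^ m * dist x y ≤ dist (T^[m] x) (T^[m] y) := by
    intro m hm
    induction m with
    | zero => simp
    | succ j ih =>
      have hj : j ≤ n - 1 := Nat.le_of_succ_le hm
      have hjn : j < n := lt_of_le_of_lt hj (Nat.sub_lt (by omega) one_pos)
      calc k ^ (j + 1) * dist x y = k * (k ^ j * dist x y) := by ring
        _ ≤ k * dist (T^[j] x) (T^[j] y) := by
            exact mul_le_mul_of_nonneg_left (ih hj) (le_of_lt hk0)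
        _ ≤ dist (T^[j+1] x) (T^[j+1] y) := hC j hjn
  have hlast : k ^ (n - 1) * dist x y < γ := by
    calc k ^ (n - 1) * dist x y ≤ dist (T^[n-1] x) (T^[n-1] y) := key (n-1) le_rfl
      _ < γ := hB (n - 1) (Nat.sub_lt (by omega) one_pos)
  rw [mem_ball, dist_comm, lt_div_iff₀ (pow_pos hk0 _)]
  linarith [hlast]
end

section
/- If T : X → X is a continuous map of a compact metric space and μ is an ergodic T-invariant Borel probability measure with E_μ(T) > 0 and dim̄_B(μ) > 0, then h_μ(T) > 0. -/
open MeasureTheory Metric Filter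

variable {X : Type*} [MetricSpace X] [MeasurableSpace X] [BorelSpace X]

/-- Minimal number of open `β`-balls needed to cover a set of `μ`-measure at least `1 - δ`. -/
noncomputable def Nmu (μ : Measure X) (β δ : ℝ) : ℕ :=
  sInf {n : ℕ | ∃ F : Finset X, F.card = n ∧
    ENNReal.ofReal (1 - δ) ≤ μ (⋃ x ∈ F, ball x β)}

/-- The upper capacity of the measure `μ` (Ledrappier):
`lim_{δ→0⁺} limsup_{β→0⁺} log N_μ(X,β,δ) / (-log β)`. -/
noncomputable def upperCapacity (μ : Measure X) : ℝ :=
  limsup (fun δ : ℝ =>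
      limsup (fun β : ℝ => Real.log (Nmu μ β δ) / (-Real.log β)) (nhdsWithin 0 (Set.Ioi 0)))
    (nhdsWithin 0 (Set.Ioi 0))

/-- Entropy of the finite partition of `X` into the fibers of `p : X → Fin m`
refined along the first `n` iterates of `T`. -/
noncomputable def dynPartEntropy (T : X → X) (μ : Measure X) {m : ℕ}
    (p : X → Fin m) (n : ℕ) : ℝ :=
  -(∑ s : Fin n → Fin m,
      (μ {x | ∀ i : Fin n, p (T^[(i : ℕ)] x) = s i}).toReal *
        Real.log (μ {x | ∀ i : Fin n, p (T^[(i : ℕ)] x) = s i}).toReal)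

/-- The Kolmogorov–Sinai entropy of `T` with respect to `μ`: the supremum over all finite
measurable partitions (fibers of measurable maps `X → Fin m`) of the limit of the entropies
of the refined partitions divided by `n`. -/
noncomputable def ksEntropy (T : X → X) (μ : Measure X) : EReal :=
  ⨆ (m : ℕ) (p : X → Fin m) (_ : Measurable p),
    ((limsup (fun n : ℕ => dynPartEntropy T μ p n / n) atTop : ℝ) : EReal)

open scoped Classical ENNReal




lemma freq_lt_of_lt_limsup {α : Type*} {f : Filter α} {u : α → ℝ} {c : ℝ}
    (hc : 0 ≤ c) (h : c < limsup u f) : ∃ᶠ x in f, c < u x := by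
  by_contra hcon
  have hev : ∀ᶠ x in f, u x ≤ c := by
    simpa [not_frequently, not_lt] using hcon
  have hmem : c ∈ {a : ℝ | ∀ᶠ x in f, u x ≤ a} := hev
  rw [limsup_eq] at h
  by_cases hb : BddBelow {a : ℝ | ∀ᶠ x in f, u x ≤ a}
  · exact absurd (csInf_le hb hmem) (not_le.2 h)
  · rw [Real.sInf_of_not_bddBelow hb] at h
    exact absurd hc (not_le.2 h)

/-- Jensen: entropy of a probability vector is at most `log` of the number of states. -/
lemma entropy_le_log_card {ι : Type*} [Fintype ι] (P : ι → ℝ)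
    (h0 : ∀ i, 0 ≤ P i) (h1 : ∑ i, P i = 1) :
    ∑ i, -(P i * Real.log (P i)) ≤ Real.log (Fintype.card ι) := by
  set t : Finset ι := Finset.univ.filter fun i => P i ≠ 0 with ht
  have hsum : ∑ i ∈ t, P i = 1 := by
    rw [ht, Finset.sum_filter_ne_zero, h1]
  have hpos : ∀ i ∈ t, 0 < P i := by
    intro i hi
    rcases (h0 i).lt_or_eq with h | h
    · exact h
    · exact absurd h.symm (by simpa [ht] using hi)
  have hjensen : ∑ i ∈ t, P i • Real.log ((P i)⁻¹) ≤
      Real.log (∑ i ∈ t, P i • (P i)⁻¹) := by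
    refine (strictConcaveOn_log_Ioi.concaveOn).le_map_sum
      (fun i hi => (hpos i hi).le) hsum (fun i hi => ?_)
    exact Set.mem_Ioi.2 (inv_pos.2 (hpos i hi))
  have hc : ∑ i ∈ t, P i • (P i)⁻¹ = (t.card : ℝ) := by
    rw [Finset.sum_congr rfl (fun i hi =>
      show P i • (P i)⁻¹ = (1:ℝ) by
        simp [smul_eq_mul, mul_inv_cancel₀ (hpos i hi).ne'])]
    simp
  have hL : ∑ i, -(P i * Real.log (P i)) = ∑ i ∈ t, P i • Real.log ((P i)⁻¹) := by
    rw [ht, Finset.sum_filter]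
    refine Finset.sum_congr rfl (fun i _ => ?_)
    by_cases h : P i = 0
    · simp [h]
    · simp [h, smul_eq_mul, Real.log_inv, mul_neg]
  have hcard : (t.card : ℝ) ≤ (Fintype.card ι : ℝ) := by
    exact_mod_cast Finset.card_le_card (Finset.subset_univ t)
  have htpos : 0 < (t.card : ℝ) := by
    rcases Finset.eq_empty_or_nonempty t with h | h
    · rw [h] at hsum; simp at hsum
    · exact_mod_cast Finset.card_pos.2 h
  calc ∑ i, -(P i * Real.log (P i)) = ∑ i ∈ t, P i • Real.log ((P i)⁻¹) := hL
    _ ≤ Real.log (∑ i ∈ t, P i • (P i)⁻¹) := hjensen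
    _ = Real.log (t.card : ℝ) := by rw [hc]
    _ ≤ Real.log (Fintype.card ι) := Real.log_le_log htpos hcard

/-- Tail bound: mass `δ` on atoms of size `≤ t` forces entropy `≥ δ log (1/t)`. -/
lemma entropy_tail_bound {ι : Type*} [Fintype ι] (P : ι → ℝ)
    (h0 : ∀ i, 0 ≤ P i) (h1 : ∀ i, P i ≤ 1) {t δ : ℝ} (ht0 : 0 < t) (ht1 : t ≤ 1)
    (hδ0 : 0 ≤ δ) (hδ : δ ≤ ∑ i ∈ Finset.univ.filter (fun i => P i ≤ t), P i) :
    δ * (-Real.log t) ≤ ∑ i, -(P i * Real.log (P i)) := by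
  have hlogt : 0 ≤ -Real.log t := by
    simpa using Real.log_nonpos ht0.le ht1
  have hterm : ∀ i, 0 ≤ -(P i * Real.log (P i)) := by
    intro i
    rcases (h0 i).lt_or_eq with h | h
    · have : Real.log (P i) ≤ 0 := Real.log_nonpos (h0 i) (h1 i)
      nlinarith
    · simp [← h]
  have hsub : ∑ i ∈ Finset.univ.filter (fun i => P i ≤ t), -(P i * Real.log (P i)) ≤
      ∑ i, -(P i * Real.log (P i)) :=
    Finset.sum_le_sum_of_subset_of_nonneg (Finset.subset_univ _) (fun i _ _ => hterm i)
  refine le_trans ?_ hsub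
  have hstep : ∀ i ∈ Finset.univ.filter (fun i => P i ≤ t),
      P i * (-Real.log t) ≤ -(P i * Real.log (P i)) := by
    intro i hi
    have hit : P i ≤ t := by simpa using hi
    rcases (h0 i).lt_or_eq with h | h
    · have : Real.log (P i) ≤ Real.log t := Real.log_le_log h hit
      nlinarith
    · simp [← h, hlogt]
  calc δ * (-Real.log t) ≤ (∑ i ∈ Finset.univ.filter (fun i => P i ≤ t), P i) * (-Real.log t) := by
        exact mul_le_mul_of_nonneg_right hδ hlogt
    _ = ∑ i ∈ Finset.univ.filter (fun i => P i ≤ t), P i * (-Real.log t) := by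
        rw [Finset.sum_mul]
    _ ≤ ∑ i ∈ Finset.univ.filter (fun i => P i ≤ t), -(P i * Real.log (P i)) :=
        Finset.sum_le_sum hstep


lemma Nmu_set_nonempty [CompactSpace X] (μ : Measure X) [IsProbabilityMeasure μ]
    {β δ : ℝ} (hβ : 0 < β) (hδ : 0 ≤ δ) :
    {n : ℕ | ∃ F : Finset X, F.card = n ∧
      ENNReal.ofReal (1 - δ) ≤ μ (⋃ x ∈ F, ball x β)}.Nonempty := by
  obtain ⟨F, hF⟩ := isCompact_univ.elim_finite_subcover (fun x : X => ball x β)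
    (fun x => isOpen_ball) (fun x _ => Set.mem_iUnion.2 ⟨x, mem_ball_self hβ⟩)
  refine ⟨F.card, F, rfl, ?_⟩
  have : μ (⋃ x ∈ F, ball x β) = 1 := by
    refine le_antisymm prob_le_one ?_
    calc (1 : ℝ≥0∞) = μ Set.univ := (measure_univ).symm
      _ ≤ μ (⋃ x ∈ F, ball x β) := measure_mono hF
  rw [this]
  calc ENNReal.ofReal (1 - δ) ≤ ENNReal.ofReal 1 := ENNReal.ofReal_le_ofReal (by linarith)
    _ = 1 := ENNReal.ofReal_one

lemma Nmu_anti [CompactSpace X] (μ : Measure X) [IsProbabilityMeasure μ]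
    {β β' δ : ℝ} (hβ : 0 < β) (h : β ≤ β') (hδ : 0 ≤ δ) :
    Nmu μ β' δ ≤ Nmu μ β δ := by
  obtain ⟨F, hFcard, hFcov⟩ := Nat.sInf_mem (Nmu_set_nonempty μ hβ hδ)
  refine Nat.sInf_le ⟨F, hFcard, le_trans hFcov (measure_mono ?_)⟩
  exact Set.iUnion₂_mono fun x _ => ball_subset_ball h

def suppSet (μ : Measure X) : Set X := {x | ∀ r, 0 < r → 0 < μ (ball x r)}

lemma suppSet_compl_null [SecondCountableTopology X] (μ : Measure X) :
    μ (suppSet μ)ᶜ = 0 := by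
  have hx : ∀ x : ↥((suppSet μ)ᶜ), ∃ r, 0 < r ∧ μ (ball (x : X) r) = 0 := by
    rintro ⟨x, hxc⟩
    simp only [suppSet, Set.mem_compl_iff, Set.mem_setOf_eq, not_forall] at hxc
    obtain ⟨r, hr, hr0⟩ := hxc
    exact ⟨r, hr, by simpa [pos_iff_ne_zero] using hr0⟩
  choose r hr hr0 using hx
  obtain ⟨T, hTc, hTU⟩ := TopologicalSpace.isOpen_iUnion_countable
    (fun x : ↥((suppSet μ)ᶜ) => ball (x : X) (r x)) (fun x => isOpen_ball)
  have hnull : μ (⋃ x : ↥((suppSet μ)ᶜ), ball (x : X) (r x)) = 0 := by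
    rw [← hTU]
    exact (measure_biUnion_null_iff hTc).2 fun x _ => hr0 x
  refine measure_mono_null (fun x hxc => ?_) hnull
  exact Set.mem_iUnion.2 ⟨⟨x, hxc⟩, mem_ball_self (hr ⟨x, hxc⟩)⟩

lemma mapsTo_suppSet {T : X → X} {μ : Measure X} (hT : Continuous T)
    (hmp : MeasurePreserving T μ μ) : Set.MapsTo T (suppSet μ) (suppSet μ) := by
  intro x hx r hr
  have hopen : IsOpen (T ⁻¹' ball (T x) r) := isOpen_ball.preimage hT
  obtain ⟨r', hr', hsub⟩ := Metric.isOpen_iff.1 hopen x (by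
    simp [Set.mem_preimage, mem_ball_self hr])
  calc (0 : ℝ≥0∞) < μ (ball x r') := hx r' hr'
    _ ≤ μ (T ⁻¹' ball (T x) r) := measure_mono hsub
    _ = μ (ball (T x) r) := hmp.measure_preimage measurableSet_ball.nullMeasurableSet

lemma expand_on_supp {T : X → X} {μ : Measure X} (hT : Continuous T) {lam ε : ℝ}
    (hzero : ∀ x : X,
      μ {y | y ∈ ball x ε ∧ dist (T x) (T y) < Real.exp lam * dist x y} = 0)
    {x x' : X} (hx' : x' ∈ suppSet μ) (hd : dist x x' < ε) :
    Real.exp lam * dist x x' ≤ dist (T x) (T x') := by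
  by_contra hcon
  push_neg at hcon
  set U := {y : X | dist y x < ε} ∩ {y : X | dist (T x) (T y) < Real.exp lam * dist x y}
    with hU
  have hUopen : IsOpen U := by
    refine IsOpen.inter ?_ ?_
    · exact isOpen_lt (continuous_id.dist continuous_const) continuous_const
    · exact isOpen_lt (continuous_const.dist hT)
        (continuous_const.mul (continuous_const.dist continuous_id))
  have hx'U : x' ∈ U := ⟨by simpa [dist_comm] using hd, hcon⟩
  obtain ⟨ρ, hρ, hsub⟩ := Metric.isOpen_iff.1 hUopen x' hx'U
  have h0 : (0 : ℝ≥0∞) < μ U := lt_of_lt_of_le (hx' ρ hρ) (measure_mono hsub)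
  have hUbad : U ⊆ {y | y ∈ ball x ε ∧ dist (T x) (T y) < Real.exp lam * dist x y} := by
    rintro y ⟨h1, h2⟩
    exact ⟨by rwa [mem_ball], h2⟩
  exact absurd (measure_mono_null hUbad (hzero x)) (by simpa using h0.ne')

lemma expand_iterate {T : X → X} {μ : Measure X} (hT : Continuous T) {lam ε : ℝ}
    (hzero : ∀ x : X,
      μ {y | y ∈ ball x ε ∧ dist (T x) (T y) < Real.exp lam * dist x y} = 0)
    (hmp : MeasurePreserving T μ μ)
    {x y : X} (hx : x ∈ suppSet μ) (hy : y ∈ suppSet μ) {n : ℕ}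
    (hdists : ∀ i, i ≤ n → dist (T^[i] x) (T^[i] y) < ε) :
    Real.exp (lam * n) * dist x y ≤ dist (T^[n] x) (T^[n] y) := by
  induction n with
  | zero => simp
  | succ n ih =>
    have hstep := expand_on_supp hT hzero
      ((mapsTo_suppSet hT hmp).iterate n hy) (hdists n (Nat.le_succ n))
    have hih := ih fun i hi => hdists i (le_trans hi (Nat.le_succ n))
    rw [Function.iterate_succ_apply', Function.iterate_succ_apply']
    calc Real.exp (lam * (n + 1 : ℕ)) * dist x y
        = Real.exp lam * (Real.exp (lam * n) * dist x y) := by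
          have hc : (((n + 1 : ℕ)) : ℝ) = (n : ℝ) + 1 := by push_cast; ring
          rw [hc, ← mul_assoc, ← Real.exp_add]; ring_nf
      _ ≤ Real.exp lam * dist (T^[n] x) (T^[n] y) :=
          mul_le_mul_of_nonneg_left hih (Real.exp_pos lam).le
      _ ≤ dist (T (T^[n] x)) (T (T^[n] y)) := hstep

lemma two_le_of_log_pos {N : ℕ} (h : 0 < Real.log N) : 2 ≤ N := by
  by_contra h'
  push_neg at h'
  interval_cases N <;> simp_all

set_option maxHeartbeats 2000000 in
theorem pos_entropy_of_pos_exponent_and_capacity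
    [CompactSpace X] (T : X → X) (hT : Continuous T)
    (μ : Measure X) [IsProbabilityMeasure μ] (herg : Ergodic T μ)
    (hE : 0 < Emeas T μ) (hdim : 0 < upperCapacity μ) :
    0 < ksEntropy T μ := by
  classical
  have hmp : MeasurePreserving T μ μ := herg.toMeasurePreserving
  have hXne : Nonempty X := by
    by_contra hempty
    have h0 : μ Set.univ = 0 := by
      have : (Set.univ : Set X) = ∅ := by
        simp [Set.eq_empty_iff_forall_notMem]; exact fun x => hempty ⟨x⟩
      simp [this]
    rw [measure_univ] at h0
    exact one_ne_zero h0
  inhabit X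
  -- extract expansion rate
  obtain ⟨l, hlmem, hl⟩ := lt_sSup_iff.1 hE
  obtain ⟨lam, hlamMem, rfl⟩ := hlmem
  have hlam : (0 : ℝ) < lam := by
    have : (0 : EReal) < (lam : EReal) := hl
    exact_mod_cast this
  obtain ⟨ε, hε, hzero⟩ := hlamMem
  -- extract capacity data
  set c : ℝ := upperCapacity μ / 2 with hc_def
  have hc : 0 < c := by positivity
  have hcd : c < upperCapacity μ := by
    rw [hc_def]; linarith
  have houter : ∃ᶠ δ' in nhdsWithin (0:ℝ) (Set.Ioi 0), c <
      limsup (fun β : ℝ => Real.log (Nmu μ β δ') / (-Real.log β))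
        (nhdsWithin 0 (Set.Ioi 0)) :=
    freq_lt_of_lt_limsup hc.le hcd
  have hIoo01 : ∀ᶠ x in nhdsWithin (0:ℝ) (Set.Ioi 0), x ∈ Set.Ioo (0:ℝ) 1 :=
    Filter.eventually_iff.mpr (by
      exact Ioo_mem_nhdsGT (zero_lt_one (α := ℝ)))
  obtain ⟨δ, hδG, hδIoo⟩ := (houter.and_eventually hIoo01).exists
  have hδ0 : 0 < δ := hδIoo.1
  have hδ1 : δ < 1 := hδIoo.2
  have hinner : ∃ᶠ β in nhdsWithin (0:ℝ) (Set.Ioi 0),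
      c < Real.log (Nmu μ β δ) / (-Real.log β) :=
    freq_lt_of_lt_limsup hc.le hδG
  -- build the partition
  obtain ⟨F0, hF0⟩ := isCompact_univ.elim_finite_subcover (fun x : X => ball x (ε/2))
    (fun x => isOpen_ball) (fun x _ => Set.mem_iUnion.2 ⟨x, mem_ball_self (by linarith)⟩)
  set lst : List X := F0.toList with hlst
  set m : ℕ := lst.length with hm_def
  set cfun : ℕ → X := fun i => lst.getD i default with hcfun
  have hcover : ∀ x : X, ∃ i : ℕ, i < m ∧ dist x (cfun i) < ε/2 := by
    intro x
    have hx := hF0 (Set.mem_univ x)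
    simp only [Set.mem_iUnion] at hx
    obtain ⟨y, hyF, hxy⟩ := hx
    have hylst : y ∈ lst := by simpa [hlst] using Finset.mem_toList.2 hyF
    obtain ⟨i, hi, hget⟩ := List.mem_iff_getElem.1 hylst
    refine ⟨i, hi, ?_⟩
    rw [hcfun]
    simp only
    rw [List.getD_eq_getElem lst default hi, hget]
    exact mem_ball.1 hxy
  set pfun : X → Fin m := fun x => ⟨Nat.find (hcover x), (Nat.find_spec (hcover x)).1⟩
    with hpfun
  have hfiber : ∀ x y : X, pfun x = pfun y → dist x y < ε := by
    intro x y hxy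
    have hx := (Nat.find_spec (hcover x)).2
    have hy := (Nat.find_spec (hcover y)).2
    have hval : Nat.find (hcover x) = Nat.find (hcover y) := by
      simpa [hpfun, Fin.ext_iff] using hxy
    rw [hval] at hx
    calc dist x y ≤ dist x (cfun (Nat.find (hcover y))) + dist y (cfun (Nat.find (hcover y))) :=
          dist_triangle_right _ _ _
      _ < ε/2 + ε/2 := add_lt_add hx hy
      _ = ε := by ring
  have hpmeas : Measurable pfun := by
    apply measurable_to_countable'
    intro i
    have hset : pfun ⁻¹' {i} = ({x : X | dist x (cfun (i:ℕ)) < ε/2} ∩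
        ⋂ j ∈ Finset.range (i:ℕ), {x : X | ¬((j < m) ∧ dist x (cfun j) < ε/2)}) := by
      ext x
      simp only [Set.mem_preimage, Set.mem_singleton_iff, hpfun, Fin.ext_iff, Set.mem_inter_iff,
        Set.mem_setOf_eq, Set.mem_iInter, Finset.mem_range]
      rw [Nat.find_eq_iff]
      constructor
      · rintro ⟨⟨hlt', hdist⟩, hmin⟩
        exact ⟨hdist, fun j hj => hmin j hj⟩
      · rintro ⟨hdist, hmin⟩
        exact ⟨⟨i.isLt, hdist⟩, fun j hj => hmin j hj⟩
    rw [hset]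
    refine MeasurableSet.inter measurableSet_ball ?_
    refine MeasurableSet.biInter (Finset.range (i:ℕ)).countable_toSet (fun j _ => ?_)
    rw [show {x : X | ¬((j < m) ∧ dist x (cfun j) < ε/2)} =
        {x : X | (j < m) ∧ dist x (cfun j) < ε/2}ᶜ from by ext x; simp]
    refine MeasurableSet.compl ?_
    by_cases hj : j < m
    · have hballeq : {x : X | (j < m) ∧ dist x (cfun j) < ε/2} = ball (cfun j) (ε/2) := by
        ext x; simp [hj, mem_ball]
      rw [hballeq]; exact measurableSet_ball
    · have hempt : {x : X | (j < m) ∧ dist x (cfun j) < ε/2} = (∅ : Set X) := by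
        ext x; simp [hj]
      rw [hempt]; exact MeasurableSet.empty
  -- cylinder sets
  have hAmeas : ∀ (n : ℕ) (s : Fin n → Fin m),
      MeasurableSet {x : X | ∀ i : Fin n, pfun (T^[(i:ℕ)] x) = s i} := by
    intro n s
    have heq : {x : X | ∀ i : Fin n, pfun (T^[(i:ℕ)] x) = s i} =
        ⋂ i : Fin n, (T^[(i:ℕ)]) ⁻¹' (pfun ⁻¹' {s i}) := by
      ext x; simp [Set.mem_iInter, Set.mem_preimage]
    rw [heq]
    exact MeasurableSet.iInter fun i =>
      (hT.iterate (i:ℕ)).measurable (hpmeas (measurableSet_singleton (s i)))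
  have hAdisj : ∀ n : ℕ, Pairwise (Function.onFun Disjoint
      (fun s : Fin n → Fin m => {x : X | ∀ i : Fin n, pfun (T^[(i:ℕ)] x) = s i})) := by
    intro n s s' hss
    rw [Function.onFun, Set.disjoint_left]
    intro x hx hx'
    exact hss (funext fun i => (hx i).symm.trans (hx' i))
  have hAsum : ∀ n : ℕ, ∑ s : Fin n → Fin m,
      μ {x : X | ∀ i : Fin n, pfun (T^[(i:ℕ)] x) = s i} = 1 := by
    intro n
    rw [← tsum_fintype (L := .unconditional _), ← measure_iUnion (hAdisj n) (hAmeas n)]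
    have huniv : ⋃ s : Fin n → Fin m, {x : X | ∀ i : Fin n, pfun (T^[(i:ℕ)] x) = s i} =
        Set.univ := by
      ext x
      simp only [Set.mem_iUnion, Set.mem_univ, iff_true, Set.mem_setOf_eq]
      exact ⟨fun i => pfun (T^[(i:ℕ)] x), fun i => rfl⟩
    rw [huniv, measure_univ]
  have hPsum : ∀ n : ℕ, ∑ s : Fin n → Fin m,
      (μ {x : X | ∀ i : Fin n, pfun (T^[(i:ℕ)] x) = s i}).toReal = 1 := by
    intro n
    rw [← ENNReal.toReal_sum (fun s _ => measure_ne_top μ _), hAsum n, ENNReal.toReal_one]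
  have hP0 : ∀ (n : ℕ) (s : Fin n → Fin m),
      0 ≤ (μ {x : X | ∀ i : Fin n, pfun (T^[(i:ℕ)] x) = s i}).toReal :=
    fun n s => ENNReal.toReal_nonneg
  have hP1 : ∀ (n : ℕ) (s : Fin n → Fin m),
      (μ {x : X | ∀ i : Fin n, pfun (T^[(i:ℕ)] x) = s i}).toReal ≤ 1 := by
    intro n s
    rw [show (1:ℝ) = (1:ℝ≥0∞).toReal from ENNReal.toReal_one.symm]
    exact ENNReal.toReal_mono ENNReal.one_ne_top prob_le_one
  have hdynsum : ∀ n : ℕ, dynPartEntropy T μ pfun n =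
      ∑ s : Fin n → Fin m, -((μ {x : X | ∀ i : Fin n, pfun (T^[(i:ℕ)] x) = s i}).toReal *
        Real.log (μ {x : X | ∀ i : Fin n, pfun (T^[(i:ℕ)] x) = s i}).toReal) := by
    intro n
    rw [dynPartEntropy]
    rw [← Finset.sum_neg_distrib]
  have hub : ∀ n : ℕ, 1 ≤ n → dynPartEntropy T μ pfun n / n ≤ Real.log m := by
    intro n hn
    have hj := entropy_le_log_card
      (fun s : Fin n → Fin m => (μ {x : X | ∀ i : Fin n, pfun (T^[(i:ℕ)] x) = s i}).toReal)
      (hP0 n) (hPsum n)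
    rw [← hdynsum n] at hj
    have hcardeq : (Fintype.card (Fin n → Fin m) : ℝ) = ((m:ℝ))^n := by
      rw [Fintype.card_fun]
      push_cast
      simp
    rw [hcardeq, Real.log_pow] at hj
    have hnpos : (0:ℝ) < n := by exact_mod_cast hn
    rw [div_le_iff₀ hnpos]
    calc dynPartEntropy T μ pfun n ≤ n * Real.log m := hj
      _ = Real.log m * n := by ring
  have hbdd : IsBoundedUnder (· ≤ ·) atTop (fun n : ℕ => dynPartEntropy T μ pfun n / n) :=
    ⟨Real.log m, eventually_map.2 (eventually_atTop.2 ⟨1, fun n hn => hub n hn⟩)⟩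
  -- key per-n lower bound
  have hkey : ∀ n : ℕ, 2 ≤ Nmu μ (ε * Real.exp (-lam * n)) δ →
      δ * Real.log (Nmu μ (ε * Real.exp (-lam * n)) δ) ≤ dynPartEntropy T μ pfun (n+1) := by
    intro n hN2
    set β : ℝ := ε * Real.exp (-lam * n) with hβdef
    have hβpos : 0 < β := mul_pos hε (Real.exp_pos _)
    set N : ℕ := Nmu μ β δ with hNdef
    set A : (Fin (n+1) → Fin m) → Set X :=
      fun s => {x : X | ∀ i : Fin (n+1), pfun (T^[(i:ℕ)] x) = s i} with hAdef
    set P : (Fin (n+1) → Fin m) → ℝ := fun s => (μ (A s)).toReal with hPdef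
    have hNpos : (0:ℝ) < (N:ℝ) := by
      have : 0 < N := lt_of_lt_of_le (by norm_num) hN2
      exact_mod_cast this
    have hN1 : (1:ℝ) ≤ (N:ℝ) := by
      have : 1 ≤ N := le_trans (by norm_num) hN2
      exact_mod_cast this
    set t : ℝ := (N:ℝ)⁻¹ with htdef
    have htpos : 0 < t := inv_pos.2 hNpos
    have ht1 : t ≤ 1 := by
      rw [htdef]
      exact inv_le_one_of_one_le₀ hN1
    have hdiam : ∀ s : Fin (n+1) → Fin m, ∀ x, x ∈ A s ∩ suppSet μ →
        ∀ y, y ∈ A s ∩ suppSet μ → dist x y < β := by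
      rintro s x ⟨hxA, hxS⟩ y ⟨hyA, hyS⟩
      have hdists : ∀ i : ℕ, i ≤ n → dist (T^[i] x) (T^[i] y) < ε := by
        intro i hi
        have hix : pfun (T^[i] x) = s ⟨i, Nat.lt_succ_of_le hi⟩ := hxA ⟨i, Nat.lt_succ_of_le hi⟩
        have hiy : pfun (T^[i] y) = s ⟨i, Nat.lt_succ_of_le hi⟩ := hyA ⟨i, Nat.lt_succ_of_le hi⟩
        exact hfiber _ _ (hix.trans hiy.symm)
      have hexp := expand_iterate hT hzero hmp hxS hyS hdists
      have hlast : dist (T^[n] x) (T^[n] y) < ε := hdists n le_rfl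
      have hexppos : (0:ℝ) < Real.exp (lam * n) := Real.exp_pos _
      have h1 : Real.exp (lam * n) * dist x y < ε := lt_of_le_of_lt hexp hlast
      have h2 : Real.exp (-lam * n) = (Real.exp (lam * n))⁻¹ := by
        rw [← Real.exp_neg]; ring_nf
      rw [hβdef, h2]
      calc dist x y = (Real.exp (lam*n) * dist x y) * (Real.exp (lam*n))⁻¹ := by field_simp
        _ < ε * (Real.exp (lam*n))⁻¹ := mul_lt_mul_of_pos_right h1 (inv_pos.2 hexppos)
    set Sbig : Finset (Fin (n+1) → Fin m) := Finset.univ.filter (fun s => t < P s) with hSbig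
    have hcaseA : ¬ (ENNReal.ofReal (1-δ) ≤ μ (⋃ s ∈ Sbig, A s)) := by
      intro hA
      have hwit : ∀ s ∈ Sbig, (A s ∩ suppSet μ).Nonempty := by
        intro s hs
        have hPs : 0 < P s := lt_trans htpos (by
          have := (Finset.mem_filter.1 hs).2
          simpa using this)
        have hμAS : μ (A s ∩ suppSet μ) ≠ 0 := by
          intro h0'
          have hsplit : μ (A s) ≤ μ (A s ∩ suppSet μ) + μ ((suppSet μ)ᶜ) := by
            refine le_trans (measure_mono ?_) (measure_union_le _ _)
            intro x hx
            by_cases hxS : x ∈ suppSet μ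
            · exact Or.inl ⟨hx, hxS⟩
            · exact Or.inr hxS
          rw [h0', suppSet_compl_null μ, add_zero] at hsplit
          have hA0 : μ (A s) = 0 := le_antisymm hsplit zero_le
          rw [hPdef] at hPs
          simp only [hA0, ENNReal.toReal_zero] at hPs
          exact lt_irrefl _ hPs
        exact nonempty_of_measure_ne_zero hμAS
      set w : (Fin (n+1) → Fin m) → X := fun s =>
        if h : (A s ∩ suppSet μ).Nonempty then h.choose else default with hwdef
      have hwmem : ∀ s ∈ Sbig, w s ∈ A s ∩ suppSet μ := by
        intro s hs
        rw [hwdef]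
        simp only [dif_pos (hwit s hs)]
        exact (hwit s hs).choose_spec
      set F : Finset X := Sbig.image w with hFdef
      have hsubset : (⋃ s ∈ Sbig, A s) ⊆ (⋃ x ∈ F, ball x β) ∪ (suppSet μ)ᶜ := by
        intro x hx
        simp only [Set.mem_iUnion] at hx
        obtain ⟨s, hs, hxA⟩ := hx
        by_cases hxS : x ∈ suppSet μ
        · left
          simp only [Set.mem_iUnion]
          refine ⟨w s, Finset.mem_image_of_mem w hs, ?_⟩
          rw [mem_ball]
          exact hdiam s x ⟨hxA, hxS⟩ (w s) (hwmem s hs)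
        · right; exact hxS
      have hcov : ENNReal.ofReal (1-δ) ≤ μ (⋃ x ∈ F, ball x β) := by
        refine le_trans hA ?_
        calc μ (⋃ s ∈ Sbig, A s) ≤ μ ((⋃ x ∈ F, ball x β) ∪ (suppSet μ)ᶜ) :=
              measure_mono hsubset
          _ ≤ μ (⋃ x ∈ F, ball x β) + μ ((suppSet μ)ᶜ) := measure_union_le _ _
          _ = μ (⋃ x ∈ F, ball x β) := by rw [suppSet_compl_null μ, add_zero]
      have hNle : N ≤ F.card := Nat.sInf_le ⟨F, rfl, hcov⟩
      have hcardle : F.card ≤ Sbig.card := Finset.card_image_le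
      have hSbigne : Sbig.Nonempty := by
        rw [← Finset.card_pos]
        omega
      have hsumle : ∑ s ∈ Sbig, P s ≤ 1 := by
        rw [← hPsum (n+1)]
        exact Finset.sum_le_sum_of_subset_of_nonneg (Finset.subset_univ _)
          (fun s _ _ => hP0 (n+1) s)
      have hlt' : (Sbig.card : ℝ) * t < ∑ s ∈ Sbig, P s := by
        calc (Sbig.card : ℝ) * t = ∑ _s ∈ Sbig, t := by rw [Finset.sum_const, nsmul_eq_mul]
          _ < ∑ s ∈ Sbig, P s := Finset.sum_lt_sum_of_nonempty hSbigne
              (fun s hs => by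
                have := (Finset.mem_filter.1 hs).2
                simpa using this)
      have hNcard : (N:ℝ) ≤ (Sbig.card : ℝ) := by
        have : N ≤ Sbig.card := le_trans hNle hcardle
        exact_mod_cast this
      have hinv : (N:ℝ) * (N:ℝ)⁻¹ = 1 := mul_inv_cancel₀ hNpos.ne'
      have hmul : (N:ℝ) * (N:ℝ)⁻¹ ≤ (Sbig.card:ℝ) * (N:ℝ)⁻¹ :=
        mul_le_mul_of_nonneg_right hNcard (inv_nonneg.2 hNpos.le)
      rw [htdef] at hlt'
      linarith
    rw [not_le] at hcaseA
    have hμU : μ (⋃ s ∈ Sbig, A s) = ∑ s ∈ Sbig, μ (A s) :=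
      measure_biUnion_finset (fun s _ s' _ hss => hAdisj (n+1) hss)
        (fun s _ => hAmeas (n+1) s)
    have hrB : ∑ s ∈ Sbig, P s < 1-δ := by
      have hlt2 : (∑ s ∈ Sbig, μ (A s)) < ENNReal.ofReal (1-δ) := hμU ▸ hcaseA
      have hne : (∑ s ∈ Sbig, μ (A s)) ≠ ⊤ := by
        rw [← hμU]; exact measure_ne_top μ _
      have h3 := (ENNReal.lt_ofReal_iff_toReal_lt hne).1 hlt2
      rwa [ENNReal.toReal_sum (fun s _ => measure_ne_top μ _)] at h3
    have htail : δ ≤ ∑ s ∈ Finset.univ.filter (fun s => P s ≤ t), P s := by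
      have hsplit := Finset.sum_filter_add_sum_filter_not Finset.univ (fun s => t < P s) P
      have hnoteq : Finset.univ.filter (fun s => ¬ t < P s) =
          Finset.univ.filter (fun s => P s ≤ t) :=
        Finset.filter_congr (fun s _ => by simp [not_lt])
      rw [hnoteq] at hsplit
      have htot : ∑ s, P s = 1 := hPsum (n+1)
      rw [htot] at hsplit
      have : ∑ s ∈ Sbig, P s + ∑ s ∈ Finset.univ.filter (fun s => P s ≤ t), P s = 1 := hsplit
      linarith
    have hH := entropy_tail_bound P (fun s => hP0 (n+1) s) (fun s => hP1 (n+1) s)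
      htpos ht1 hδ0.le htail
    have hlogt : -Real.log t = Real.log N := by rw [htdef, Real.log_inv]; ring
    rw [hlogt] at hH
    rw [hdynsum (n+1)]
    exact hH
  -- frequency of large entropy ratio
  set a : ℝ := δ * c * lam / 2 with ha_def
  have ha : 0 < a := by positivity
  have hfreq : ∃ᶠ n in atTop, a ≤ dynPartEntropy T μ pfun n / n := by
    rw [frequently_atTop]
    intro N₀
    obtain ⟨N₂, hN₂⟩ := exists_nat_ge (max (N₀ : ℝ) (2 + 2 * |Real.log ε| / lam))
    have hN₂0 : (N₀ : ℝ) ≤ N₂ := le_trans (le_max_left _ _) hN₂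
    have hN₂nat : N₀ ≤ N₂ := by exact_mod_cast hN₂0
    have hN₂big : 2 + 2 * |Real.log ε| / lam ≤ (N₂ : ℝ) := le_trans (le_max_right _ _) hN₂
    set b : ℝ := min 1 (ε * Real.exp (-lam * N₂)) with hb_def
    have hb : 0 < b := lt_min one_pos (mul_pos hε (Real.exp_pos _))
    have hIoob : ∀ᶠ x in nhdsWithin (0:ℝ) (Set.Ioi 0), x ∈ Set.Ioo (0:ℝ) b :=
      Filter.eventually_iff.mpr (by exact Ioo_mem_nhdsGT hb)
    obtain ⟨β, hratio, hβIoo⟩ := (hinner.and_eventually hIoob).exists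
    have hβ0 : 0 < β := hβIoo.1
    have hβ1 : β < 1 := lt_of_lt_of_le hβIoo.2 (min_le_left _ _)
    have hβN₂ : β < ε * Real.exp (-lam * N₂) := lt_of_lt_of_le hβIoo.2 (min_le_right _ _)
    -- find minimal j with ε * exp(-lam j) ≤ β
    have hqex : ∃ j : ℕ, ε * Real.exp (-lam * (j:ℝ)) ≤ β := by
      obtain ⟨j₀, hj₀⟩ := exists_nat_ge ((Real.log ε - Real.log β) / lam)
      refine ⟨j₀, ?_⟩
      have h1 : Real.log ε - Real.log β ≤ lam * j₀ := by
        rw [div_le_iff₀ hlam] at hj₀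
        linarith
      have h2 : -lam * (j₀:ℝ) ≤ Real.log β - Real.log ε := by linarith
      calc ε * Real.exp (-lam * (j₀:ℝ)) ≤ ε * Real.exp (Real.log β - Real.log ε) :=
            mul_le_mul_of_nonneg_left (Real.exp_le_exp.2 h2) hε.le
        _ = β := by
            rw [Real.exp_sub, Real.exp_log hβ0, Real.exp_log hε]
            field_simp
    set nf : ℕ := Nat.find hqex with hnf_def
    have hnfspec : ε * Real.exp (-lam * (nf:ℝ)) ≤ β := Nat.find_spec hqex
    have hgt : N₂ < nf := by
      by_contra hle
      push_neg at hle
      have hmono : ε * Real.exp (-lam * (N₂:ℝ)) ≤ ε * Real.exp (-lam * (nf:ℝ)) := by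
        refine mul_le_mul_of_nonneg_left (Real.exp_le_exp.2 ?_) hε.le
        have : (nf:ℝ) ≤ (N₂:ℝ) := by exact_mod_cast hle
        nlinarith
      linarith
    have hnfpos : 0 < nf := lt_of_le_of_lt (Nat.zero_le _) hgt
    set k : ℕ := nf - 1 with hk_def
    have hnfk : nf = k + 1 := by omega
    have hkN₂ : N₂ ≤ k := by omega
    have hqk1 : ε * Real.exp (-lam * ((k:ℝ)+1)) ≤ β := by
      have : ((nf:ℕ):ℝ) = (k:ℝ) + 1 := by rw [hnfk]; push_cast; ring
      rw [← this]
      exact hnfspec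
    have hqk : β < ε * Real.exp (-lam * (k:ℝ)) := by
      have hmin := Nat.find_min hqex (show k < nf by omega)
      push_neg at hmin
      exact hmin
    -- numeric chain
    have hmlogβ : 0 < -Real.log β := by
      have := Real.log_neg hβ0 hβ1
      linarith
    have hlogN : c * (-Real.log β) < Real.log (Nmu μ β δ) := (lt_div_iff₀ hmlogβ).1 hratio
    have hN2 : 2 ≤ Nmu μ β δ :=
      two_le_of_log_pos (lt_trans (mul_pos hc hmlogβ) hlogN)
    have hβk1pos : 0 < ε * Real.exp (-lam * ((k:ℝ)+1)) := mul_pos hε (Real.exp_pos _)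
    have hanti : Nmu μ β δ ≤ Nmu μ (ε * Real.exp (-lam * ((k:ℝ)+1))) δ :=
      Nmu_anti μ hβk1pos hqk1 hδ0.le
    have hN2' : 2 ≤ Nmu μ (ε * Real.exp (-lam * ((k:ℝ)+1))) δ := le_trans hN2 hanti
    have hcast : (((k+1 : ℕ)):ℝ) = (k:ℝ) + 1 := by push_cast; ring
    have hkeyk : δ * Real.log (Nmu μ (ε * Real.exp (-lam * ((k:ℝ)+1))) δ) ≤
        dynPartEntropy T μ pfun (k+2) := by
      have h := hkey (k+1)
      rw [hcast] at h
      exact h hN2'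
    have hlogmono : Real.log (Nmu μ β δ) ≤
        Real.log (Nmu μ (ε * Real.exp (-lam * ((k:ℝ)+1))) δ) := by
      have h0 : (0:ℝ) < (Nmu μ β δ : ℝ) := by
        have : 0 < Nmu μ β δ := by omega
        exact_mod_cast this
      exact Real.log_le_log h0 (by exact_mod_cast hanti)
    have hlogβk : lam * (k:ℝ) - Real.log ε < -Real.log β := by
      have hlt : Real.log β < Real.log (ε * Real.exp (-lam * (k:ℝ))) := Real.log_lt_log hβ0 hqk
      rw [Real.log_mul hε.ne' (Real.exp_ne_zero _), Real.log_exp] at hlt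
      linarith
    have hchain : c * (lam * (k:ℝ) - Real.log ε) ≤
        Real.log (Nmu μ (ε * Real.exp (-lam * ((k:ℝ)+1))) δ) := by
      have h1 : c * (lam * (k:ℝ) - Real.log ε) ≤ c * (-Real.log β) :=
        mul_le_mul_of_nonneg_left hlogβk.le hc.le
      linarith
    have hHlow : δ * (c * (lam * (k:ℝ) - Real.log ε)) ≤ dynPartEntropy T μ pfun (k+2) :=
      le_trans (mul_le_mul_of_nonneg_left hchain hδ0.le) hkeyk
    refine ⟨k+2, by omega, ?_⟩
    have hk2pos : (0:ℝ) < ((k+2 : ℕ):ℝ) := by positivity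
    rw [le_div_iff₀ hk2pos]
    have habs : Real.log ε ≤ |Real.log ε| := le_abs_self _
    have hklarge : 2 + 2 * |Real.log ε| / lam ≤ (k:ℝ) := by
      have : (N₂:ℝ) ≤ (k:ℝ) := by exact_mod_cast hkN₂
      linarith
    have hlamk : 2 * lam + 2 * |Real.log ε| ≤ lam * (k:ℝ) := by
      have h2 : lam * (2 + 2 * |Real.log ε| / lam) ≤ lam * (k:ℝ) :=
        mul_le_mul_of_nonneg_left hklarge hlam.le
      have h3 : lam * (2 + 2 * |Real.log ε| / lam) = 2 * lam + 2 * |Real.log ε| := by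
        field_simp
      linarith
    have hcastk2 : ((k+2 : ℕ):ℝ) = (k:ℝ) + 2 := by push_cast; ring
    rw [ha_def, hcastk2]
    have hnn : (0:ℝ) ≤ lam * (k:ℝ)/2 - lam - Real.log ε := by linarith
    have hprod : 0 ≤ (δ*c) * (lam * (k:ℝ)/2 - lam - Real.log ε) :=
      mul_nonneg (mul_pos hδ0 hc).le hnn
    clear hkey hbdd hub hdynsum hP1 hP0 hPsum hAsum hAdisj hAmeas hpmeas hfiber
      hzero hinner houter hIoo01 hF0 hqk1 hqk hnfspec hanti hlogmono hchain
    have hfinal : δ * c * lam / 2 * ((k:ℝ) + 2) ≤ δ * (c * (lam * (k:ℝ) - Real.log ε)) := by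
      nlinarith [hprod]
    exact le_trans hfinal hHlow
  have hL : a ≤ limsup (fun n : ℕ => dynPartEntropy T μ pfun n / n) atTop :=
    le_limsup_of_frequently_le hfreq hbdd
  have hmono : ((limsup (fun n : ℕ => dynPartEntropy T μ pfun n / n) atTop : ℝ) : EReal) ≤
      ksEntropy T μ :=
    le_iSup_of_le m (le_iSup_of_le pfun (le_iSup_of_le hpmeas le_rfl))
  calc (0:EReal) < (a:EReal) := by exact_mod_cast ha
    _ ≤ ((limsup (fun n : ℕ => dynPartEntropy T μ pfun n / n) atTop : ℝ) : EReal) := by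
        exact_mod_cast hL
    _ ≤ ksEntropy T μ := hmono
end

section
/- A pointwise equicontinuous measurable map of a Lindelöf metric space has no positively expansive Borel probability measures; consequently, it has no nonatomic invariant Borel probability measures with positive expansion exponent. -/
open MeasureTheory Metric Filter

variable {X : Type*} [MetricSpace X] [MeasurableSpace X] [BorelSpace X]

theorem equicontinuous_no_expansive_measures
    [LindelofSpace X] (T : X → X) (hT : Measurable T)
    (heq : ∀ x : X, ∀ ε > (0 : ℝ), ∃ δ > (0 : ℝ), ∀ y : X, dist x y < δ →
      ∀ i : ℕ, dist (T^[i] x) (T^[i] y) < ε) :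
    (∀ μ : Measure X, IsProbabilityMeasure μ →
      ¬ ∃ ε > (0 : ℝ), ∀ x : X, μ {y | ∀ i : ℕ, dist (T^[i] x) (T^[i] y) ≤ ε} = 0) ∧
    (∀ μ : Measure X, IsProbabilityMeasure μ → (∀ x : X, μ {x} = 0) →
      (∀ B : Set X, MeasurableSet B → μ (T ⁻¹' B) = μ B) → ¬ (0 < Emeas T μ)) := by
  have part1 : ∀ μ : Measure X, IsProbabilityMeasure μ →
      ¬ ∃ ε > (0 : ℝ), ∀ x : X, μ {y | ∀ i : ℕ, dist (T^[i] x) (T^[i] y) ≤ ε} = 0 := by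
    rintro μ hμ ⟨ε, hε, hx⟩
    choose δ hδ hδ' using fun x => heq x ε hε
    have hcover : (Set.univ : Set X) ⊆ ⋃ x : X, ball x (δ x) := fun x _ =>
      Set.mem_iUnion.2 ⟨x, mem_ball_self (hδ x)⟩
    obtain ⟨t, htc, htcov⟩ := isLindelof_univ.elim_countable_subcover
      (fun x => ball x (δ x)) (fun _ => isOpen_ball) hcover
    have h0 : μ Set.univ = 0 := by
      refine measure_mono_null htcov ?_
      refine (measure_biUnion_null_iff htc).2 fun x _ => ?_
      refine measure_mono_null (fun y hy => ?_) (hx x)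
      intro i
      exact (hδ' x y (by rw [dist_comm]; exact mem_ball.1 hy) i).le
    simp [measure_univ] at h0
  refine ⟨part1, ?_⟩
  intro μ hμ hna hinv hpos
  -- extract a positive rate
  have hex : ∃ e ∈ (fun lam : ℝ => (lam : EReal)) '' measExpSet T μ, (0 : EReal) < e := by
    by_contra h
    push_neg at h
    exact absurd (sSup_le fun b hb => h b hb) (not_le.2 hpos)
  obtain ⟨e, ⟨l, hl, rfl⟩, hle⟩ := hex
  have hlpos : (0 : ℝ) < l := EReal.coe_pos.mp (by simpa using hle)
  obtain ⟨ε, hε, hA0⟩ := hl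
  -- measurability of the expansion sets
  have hAmeas : ∀ c : X,
      MeasurableSet {y | y ∈ ball c ε ∧ dist (T c) (T y) < Real.exp l * dist c y} := by
    intro c
    have : {y | y ∈ ball c ε ∧ dist (T c) (T y) < Real.exp l * dist c y}
        = ball c ε ∩ {y | dist (T c) (T y) < Real.exp l * dist c y} := rfl
    rw [this]
    exact measurableSet_ball.inter
      (measurableSet_lt (measurable_const.dist hT)
        (measurable_const.mul (measurable_const.dist measurable_id)))
  -- iterated invariance
  have hinv' : ∀ (n : ℕ) (B : Set X), MeasurableSet B → μ (T^[n] ⁻¹' B) = μ B := by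
    intro n
    induction n with
    | zero => simp
    | succ n ih =>
      intro B hB
      rw [Function.iterate_succ, Set.preimage_comp, hinv _ ((hT.iterate n) hB), ih B hB]
  refine part1 μ hμ ⟨ε / 2, half_pos hε, fun x => ?_⟩
  have hsub : {y | ∀ i : ℕ, dist (T^[i] x) (T^[i] y) ≤ ε / 2} ⊆
      {x} ∪ ⋃ i : ℕ, T^[i] ⁻¹'
        {y | y ∈ ball (T^[i] x) ε ∧ dist (T (T^[i] x)) (T y) < Real.exp l * dist (T^[i] x) y} := by
    intro y hy
    by_cases hmem : ∃ i : ℕ, T^[i] y ∈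
        {y | y ∈ ball (T^[i] x) ε ∧ dist (T (T^[i] x)) (T y) < Real.exp l * dist (T^[i] x) y}
    · obtain ⟨i, hi⟩ := hmem
      exact Or.inr (Set.mem_iUnion.2 ⟨i, hi⟩)
    · push_neg at hmem
      left
      have grow : ∀ i : ℕ, Real.exp l ^ i * dist x y ≤ dist (T^[i] x) (T^[i] y) := by
        intro i
        induction i with
        | zero => simp
        | succ n ih =>
          have hball : T^[n] y ∈ ball (T^[n] x) ε := by
            rw [mem_ball, dist_comm]
            exact lt_of_le_of_lt (hy n) (half_lt_self hε)
          have hge : Real.exp l * dist (T^[n] x) (T^[n] y)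
              ≤ dist (T (T^[n] x)) (T (T^[n] y)) := by
            by_contra h
            push_neg at h
            exact hmem n ⟨hball, h⟩
          calc Real.exp l ^ (n + 1) * dist x y
              = Real.exp l * (Real.exp l ^ n * dist x y) := by ring
            _ ≤ Real.exp l * dist (T^[n] x) (T^[n] y) := by
                exact mul_le_mul_of_nonneg_left ih (Real.exp_pos l).le
            _ ≤ dist (T (T^[n] x)) (T (T^[n] y)) := hge
            _ = dist (T^[n + 1] x) (T^[n + 1] y) := by
                rw [Function.iterate_succ_apply', Function.iterate_succ_apply']
      have hdxy : dist x y = 0 := by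
        by_contra hne
        have hd : 0 < dist x y := lt_of_le_of_ne dist_nonneg (Ne.symm hne)
        have h1 : (1 : ℝ) < Real.exp l := by
          rw [Real.one_lt_exp_iff]; exact hlpos
        obtain ⟨n, hn⟩ := pow_unbounded_of_one_lt (ε / 2 / dist x y) h1
        have : ε / 2 < Real.exp l ^ n * dist x y := by
          rw [div_lt_iff₀ hd] at hn
          linarith
        exact absurd (le_trans (grow n) (hy n)) (not_le.2 this)
      have : y = x := by rw [dist_comm] at hdxy; exact dist_eq_zero.1 hdxy
      simp [this]
  refine measure_mono_null hsub (measure_union_null (hna x) (measure_iUnion_null fun i => ?_))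
  rw [hinv' i _ (hAmeas (T^[i] x))]
  exact hA0 (T^[i] x)
end

section
/- Let T : X → X be a measurable map of a metric space. If there exist x ∈ X and a sequence (y_i) with y_i ≠ x, y_i → x, and d(T(x),T(y_i)) < e^λ·d(x,y_i) for all i, then the measure μ = Σ_{i≥1} 2^{-i} δ_{y_i} satisfies E_μ(T) ≤ λ. -/
open MeasureTheory Metric Filter

variable {X : Type*} [MetricSpace X] [MeasurableSpace X] [BorelSpace X]

theorem exponent_le_of_nonexpanding_sequence
    (T : X → X) (hT : Measurable T) (lam : ℝ) (x : X) (y : ℕ → X)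
    (hne : ∀ i : ℕ, y i ≠ x) (hlim : Tendsto y atTop (nhds x))
    (hd : ∀ i : ℕ, dist (T x) (T (y i)) < Real.exp lam * dist x (y i)) :
    Emeas T (Measure.sum fun i : ℕ => ((2 : ENNReal) ^ (i + 1))⁻¹ • Measure.dirac (y i)) ≤
      (lam : EReal) := by
  apply sSup_le
  rintro e ⟨lam', ⟨ε, hε, hμ⟩, rfl⟩
  rw [EReal.coe_le_coe_iff]
  by_contra hlt
  push_neg at hlt
  obtain ⟨i, hi⟩ := (Metric.tendsto_atTop.mp hlim ε hε)
  set A : Set X := {z | z ∈ ball x ε ∧ dist (T x) (T z) < Real.exp lam' * dist x z} with hA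
  have hmem : y i ∈ A := by
    refine ⟨by rw [mem_ball]; exact hi i le_rfl, lt_of_lt_of_le (hd i) ?_⟩
    exact mul_le_mul_of_nonneg_right (Real.exp_le_exp.mpr hlt.le) dist_nonneg
  have h0 := hμ x
  have hle : (((2 : ENNReal) ^ (i + 1))⁻¹ • Measure.dirac (y i)) A ≤
      (Measure.sum fun i : ℕ => ((2 : ENNReal) ^ (i + 1))⁻¹ • Measure.dirac (y i)) A :=
    Measure.le_sum _ i A
  rw [h0, Measure.smul_apply, smul_eq_mul, Measure.dirac_apply_of_mem hmem,
    mul_one, nonpos_iff_eq_zero, ENNReal.inv_eq_zero] at hle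
  exact (ENNReal.pow_ne_top (by norm_num)) hle
end
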